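/- Let (R, 𝔪) be a Noetherian local ring, I an 𝔪-primary ideal, and f ∈ R with f^N ∈ I for some positive integer N. Then length_R(R/I) ≤ N · length_R(R/(I + ⟨f⟩)). -/

import Mathlib

open IsLocalRing

/-- Length of a module, as the Krull dimension of its submodule lattice. -/
noncomputable def moduleLength (R M : Type*) [Ring R] [AddCommGroup M] [Module R M] :
    WithBot ℕ∞ :=
  Order.krullDim (Submodule R M)

section aux

open Order

lemma aux_height_succ_le {α : Type*} [Preorder α] {a b : α} (h : a < b) :
    Order.height a + 1 ≤ Order.height b := by
  by_cases hfin : Order.height a < ⊤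
  · exact ENat.add_one_le_iff hfin.ne |>.mpr (Order.height_strictMono h hfin)
  · have ha : Order.height a = ⊤ := by simpa using hfin
    have hb : Order.height b = ⊤ := top_le_iff.mp (ha ▸ Order.height_mono h.le)
    simp [ha, hb]

lemma aux_ltseries_prod {β γ : Type*} [PartialOrder β] [PartialOrder γ]
    (n : ℕ) (q : LTSeries (β × γ)) (hn : q.length = n) :
    (q.length : ℕ∞) ≤ Order.height q.last.1 + Order.height q.last.2 := by
  induction n generalizing q with
  | zero => simp [hn]
  | succ n ih =>
    rw [hn]
    have hne : q.length ≠ 0 := by omega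
    have hstep : q.eraseLast.last < q.last := q.eraseLast_last_rel_last hne
    have hlen : q.eraseLast.length = n := by simp [hn]
    have IH := hlen ▸ ih q.eraseLast hlen
    have h1 : q.eraseLast.last.1 ≤ q.last.1 := hstep.le.1
    have h2 : q.eraseLast.last.2 ≤ q.last.2 := hstep.le.2
    rcases Prod.lt_iff.mp hstep with ⟨h1', h2'⟩ | ⟨h1', h2'⟩
    · calc ((n + 1 : ℕ) : ℕ∞) = (n : ℕ∞) + 1 := by push_cast; ring
        _ ≤ (Order.height q.eraseLast.last.1 + Order.height q.eraseLast.last.2) + 1 := by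
            exact add_le_add_left IH 1
        _ = (Order.height q.eraseLast.last.1 + 1) + Order.height q.eraseLast.last.2 := by ring
        _ ≤ Order.height q.last.1 + Order.height q.last.2 :=
            add_le_add (aux_height_succ_le h1') (Order.height_mono h2')
    · calc ((n + 1 : ℕ) : ℕ∞) = (n : ℕ∞) + 1 := by push_cast; ring
        _ ≤ (Order.height q.eraseLast.last.1 + Order.height q.eraseLast.last.2) + 1 := by
            exact add_le_add_left IH 1
        _ = Order.height q.eraseLast.last.1 + (Order.height q.eraseLast.last.2 + 1) := by ring
        _ ≤ Order.height q.last.1 + Order.height q.last.2 :=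
            add_le_add (Order.height_mono h1') (aux_height_succ_le h2')

lemma aux_krullDim_prod_le {β γ : Type*} [PartialOrder β] [PartialOrder γ]
    [Nonempty β] [Nonempty γ] :
    Order.krullDim (β × γ) ≤ Order.krullDim β + Order.krullDim γ := by
  rw [Order.krullDim_eq_iSup_length, WithBot.coe_iSup (OrderTop.bddAbove _)]
  refine iSup_le fun q => ?_
  calc ((q.length : ℕ∞) : WithBot ℕ∞)
      ≤ ((Order.height q.last.1 + Order.height q.last.2 : ℕ∞) : WithBot ℕ∞) := by
        exact_mod_cast aux_ltseries_prod q.length q rfl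
    _ = (Order.height q.last.1 : WithBot ℕ∞) + (Order.height q.last.2 : WithBot ℕ∞) := by
        push_cast; rfl
    _ ≤ Order.krullDim β + Order.krullDim γ :=
        add_le_add (Order.height_le_krullDim _) (Order.height_le_krullDim _)

/-- Subadditivity of length with respect to a submodule. -/
lemma aux_length_le_add {R M : Type*} [Ring R] [AddCommGroup M] [Module R M]
    (N : Submodule R M) :
    moduleLength R M ≤ moduleLength R N + moduleLength R (M ⧸ N) := by
  have hsm : StrictMono (fun p : Submodule R M =>
      ((Submodule.comap N.subtype p, Submodule.map N.mkQ p) :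
        Submodule R N × Submodule R (M ⧸ N))) := by
    intro p q hpq
    refine lt_of_le_of_ne
      ⟨Submodule.comap_mono hpq.le, Submodule.map_mono hpq.le⟩ ?_
    intro heq
    have h1 : Submodule.comap N.subtype p = Submodule.comap N.subtype q :=
      congrArg Prod.fst heq
    have h2 : Submodule.map N.mkQ p = Submodule.map N.mkQ q :=
      congrArg Prod.snd heq
    have hinf : N ⊓ p = N ⊓ q := by
      rw [← Submodule.map_comap_subtype, ← Submodule.map_comap_subtype, h1]
    have hsup : N ⊔ p = N ⊔ q := by
      rw [← Submodule.comap_map_mkQ, ← Submodule.comap_map_mkQ, h2]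
    refine hpq.ne (eq_of_le_of_inf_le_of_sup_le (z := N) hpq.le ?_ ?_)
    · rw [inf_comm q N, inf_comm p N, hinf]
    · rw [sup_comm q N, sup_comm p N, hsup]
  calc moduleLength R M
      ≤ Order.krullDim (Submodule R N × Submodule R (M ⧸ N)) :=
        Order.krullDim_le_of_strictMono _ hsm
    _ ≤ moduleLength R N + moduleLength R (M ⧸ N) := aux_krullDim_prod_le

lemma aux_length_le_of_surjective {R M M' : Type*} [Ring R] [AddCommGroup M] [Module R M]
    [AddCommGroup M'] [Module R M'] (f : M →ₗ[R] M') (hf : Function.Surjective f) :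
    moduleLength R M' ≤ moduleLength R M :=
  Order.krullDim_le_of_strictMono (Submodule.comap f)
    (Submodule.comap_strictMono_of_surjective hf)

lemma aux_length_eq_of_equiv {R M M' : Type*} [Ring R] [AddCommGroup M] [Module R M]
    [AddCommGroup M'] [Module R M'] (e : M ≃ₗ[R] M') :
    moduleLength R M = moduleLength R M' :=
  Order.krullDim_eq_of_orderIso (Submodule.orderIsoMapComap e)

lemma aux_key {R : Type*} [CommRing R] (I : Ideal R) (f : R) : ∀ n : ℕ,
    moduleLength R (R ⧸ (I ⊔ Ideal.span {f ^ n})) ≤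
      n • moduleLength R (R ⧸ (I ⊔ Ideal.span {f})) := by
  intro n
  induction n with
  | zero =>
    have htop : I ⊔ Ideal.span {f ^ 0} = ⊤ := by
      rw [pow_zero, Ideal.span_singleton_one]; exact sup_top_eq I
    have hs : Subsingleton (R ⧸ (I ⊔ Ideal.span {f ^ 0})) :=
      Submodule.Quotient.subsingleton_iff.mpr htop
    have hs2 : Subsingleton (Submodule R (R ⧸ (I ⊔ Ideal.span {f ^ 0}))) := by
      constructor
      intro a b
      ext x
      have hx : x = 0 := Subsingleton.elim x 0
      simp [hx]
    rw [zero_nsmul]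
    exact Order.krullDim_nonpos_of_subsingleton
  | succ n ih =>
    set J : Ideal R := I ⊔ Ideal.span {f ^ (n + 1)} with hJ
    set Jn : Ideal R := I ⊔ Ideal.span {f ^ n} with hJn
    have hle : J ≤ Jn := by
      refine sup_le_sup_left ?_ I
      exact Ideal.span_singleton_le_span_singleton.mpr ⟨f, (pow_succ f n)⟩
    set K : Submodule R (R ⧸ J) := Submodule.map (J : Submodule R R).mkQ
      (Jn : Submodule R R) with hK
    -- the kernel condition for the map r ↦ r • (f^n mod J)
    have hker : I ⊔ Ideal.span {f} ≤
        LinearMap.ker (LinearMap.toSpanSingleton R (R ⧸ J)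
          ((J : Submodule R R).mkQ (f ^ n))) := by
      refine sup_le ?_ ?_
      · intro x hx
        have hxf : x * f ^ n ∈ J := Ideal.mem_sup_left (Ideal.mul_mem_right _ _ hx)
        simp only [LinearMap.mem_ker, LinearMap.toSpanSingleton_apply,
          Submodule.mkQ_apply, ← Submodule.Quotient.mk_smul, smul_eq_mul]
        exact (Submodule.Quotient.mk_eq_zero _).mpr hxf
      · rw [Ideal.span_le]
        intro x hx
        have hxf : x * f ^ n ∈ J := by
          rw [Set.mem_singleton_iff] at hx
          subst hx
          refine Ideal.mem_sup_right ?_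
          rw [← pow_succ']
          exact Ideal.subset_span rfl
        simp only [SetLike.mem_coe, LinearMap.mem_ker, LinearMap.toSpanSingleton_apply,
          Submodule.mkQ_apply, ← Submodule.Quotient.mk_smul, smul_eq_mul]
        exact (Submodule.Quotient.mk_eq_zero _).mpr hxf
    set ψ : (R ⧸ (I ⊔ Ideal.span {f})) →ₗ[R] (R ⧸ J) :=
      Submodule.liftQ _ _ hker with hψ
    have hrange : LinearMap.range ψ = K := by
      have h1 : LinearMap.range ψ =
          LinearMap.range (LinearMap.toSpanSingleton R (R ⧸ J)
            ((J : Submodule R R).mkQ (f ^ n))) := by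
        apply le_antisymm
        · rintro x ⟨y, rfl⟩
          obtain ⟨z, rfl⟩ := Submodule.mkQ_surjective _ y
          exact ⟨z, rfl⟩
        · rintro x ⟨y, rfl⟩
          exact ⟨Submodule.mkQ _ y, rfl⟩
      rw [h1, ← LinearMap.span_singleton_eq_range, hK]
      have : (Jn : Submodule R R) = (I : Submodule R R) ⊔ Ideal.span {f ^ n} := rfl
      rw [this, Submodule.map_sup]
      have hI0 : Submodule.map (J : Submodule R R).mkQ (I : Submodule R R) = ⊥ :=
        le_bot_iff.mp (Submodule.map_le_iff_le_comap.mpr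
          (by rw [Submodule.comap_bot, Submodule.ker_mkQ]; exact le_sup_left))
      rw [hI0, bot_sup_eq, Ideal.span, Submodule.map_span]
      simp
    have hKlen : moduleLength R K ≤ moduleLength R (R ⧸ (I ⊔ Ideal.span {f})) := by
      have hsurj : Function.Surjective ψ.rangeRestrict := ψ.surjective_rangeRestrict
      calc moduleLength R K
          = moduleLength R (LinearMap.range ψ) := by rw [hrange]
        _ ≤ moduleLength R (R ⧸ (I ⊔ Ideal.span {f})) :=
            aux_length_le_of_surjective ψ.rangeRestrict hsurj
    have hquot : moduleLength R ((R ⧸ J) ⧸ K) = moduleLength R (R ⧸ Jn) :=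
      aux_length_eq_of_equiv (Submodule.quotientQuotientEquivQuotient
        (J : Submodule R R) (Jn : Submodule R R) hle)
    calc moduleLength R (R ⧸ J)
        ≤ moduleLength R K + moduleLength R ((R ⧸ J) ⧸ K) := aux_length_le_add K
      _ = moduleLength R K + moduleLength R (R ⧸ Jn) := by rw [hquot]
      _ ≤ moduleLength R (R ⧸ (I ⊔ Ideal.span {f})) +
            n • moduleLength R (R ⧸ (I ⊔ Ideal.span {f})) := add_le_add hKlen ih
      _ = (n + 1) • moduleLength R (R ⧸ (I ⊔ Ideal.span {f})) := by
          rw [succ_nsmul]; ring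

end aux

/-- If `I` is `𝔪`-primary in a Noetherian local ring and `f ^ N ∈ I`, then
`length (R/I) ≤ N · length (R/(I + ⟨f⟩))`. -/
theorem stmt4 {R : Type*} [CommRing R] [IsNoetherianRing R] [IsLocalRing R]
    (I : Ideal R) (hI : I.radical = IsLocalRing.maximalIdeal R)
    (f : R) (N : ℕ) (hN : 0 < N) (hf : f ^ N ∈ I) :
    moduleLength R (R ⧸ I) ≤ N • moduleLength R (R ⧸ (I ⊔ Ideal.span {f})) := by
  have hIeq : I ⊔ Ideal.span {f ^ N} = I := by
    rw [sup_eq_left, Ideal.span_le]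
    intro x hx
    rcases Set.mem_singleton_iff.mp hx with rfl
    exact hf
  calc moduleLength R (R ⧸ I) = moduleLength R (R ⧸ (I ⊔ Ideal.span {f ^ N})) := by rw [hIeq]
    _ ≤ N • moduleLength R (R ⧸ (I ⊔ Ideal.span {f})) := aux_key I f N
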